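/- arXiv:2112.15150 — 4 statements merged into one kernel-verified Lean document; each statement's English description precedes it below -/
import Mathlib

section
/- The number of n-tuples (v_1,...,v_n) with entries in {0,1,2} satisfying the condition that v_i = 1 implies i > 1 and v_j ≠ 0 for all j < i, equals 2^(n-2) * (n+3) for all n ≥ 1 (interpreting 2^(-1)*(4) = 2 for n = 1; equivalently, for n ≥ 2 the count is 2^(n-2)*(n+3)). -/
/-- A ★-sequence: `v i = 1` implies `i > 0` and all earlier entries are nonzero. -/
def StarSeq {n : ℕ} (v : Fin n → Fin 3) : Prop :=
  ∀ i, v i = 1 → 0 < i.val ∧ ∀ j, j < i → v j ≠ 0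

/-!
Splitting off the first entry: a ★-sequence starts with `0` followed by a word in `{0, 2}`, or
with `2` followed by a *weak* ★-sequence (the condition without `i > 0`). A weak ★-sequence
starts with `0` followed by a word in `{0, 2}`, or with `1` or `2` followed by a weak ★-sequence.
Hence the number `W n` of weak ★-sequences satisfies `W (n + 1) = 2 ^ n + 2 * W n`, so
`2 * W n = 2 ^ n * (n + 2)`, and the number `S (n + 1) = 2 ^ n + W n` of ★-sequences of length
`n + 1` satisfies `4 * S (n + 1) = 2 ^ (n + 1) * (n + 4)`.
-/

def WeakStarSeq {n : ℕ} (v : Fin n → Fin 3) : Prop :=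
  ∀ i, v i = 1 → ∀ j, j < i → v j ≠ 0

theorem Nat.card_subtype_fin_succ_pi {α : Type*} [Fintype α] {n : ℕ}
    (P : (Fin (n + 1) → α) → Prop) :
    Nat.card {v : Fin (n + 1) → α // P v} = ∑ a, Nat.card {w : Fin n → α // P (Fin.cons a w)} :=
  calc Nat.card {v : Fin (n + 1) → α // P v}
      = Nat.card (Σ a, {w : Fin n → α // P (Fin.cons a w)}) :=
        Nat.card_congr <| (Equiv.subtypeEquiv (Fin.consEquiv fun _ => α).symm fun v => by simp).trans
          (Equiv.subtypeProdEquivSigmaSubtype fun a w => P (Fin.cons a w))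
    _ = _ := Nat.card_sigma

theorem Nat.card_subtype_forall_ne {ι α : Type*} [Fintype ι] [Fintype α] (b : α) :
    Nat.card {w : ι → α // ∀ i, w i ≠ b} = (Fintype.card α - 1) ^ Fintype.card ι := by
  classical
  rw [Nat.card_congr (Equiv.subtypePiEquivPi (p := fun _ x => x ≠ b)), Nat.card_pi]
  simp [Nat.card_eq_fintype_card, Fintype.card_subtype_compl]

theorem starSeq_iff {n : ℕ} (v : Fin (n + 1) → Fin 3) : StarSeq v ↔ v 0 ≠ 1 ∧ WeakStarSeq v := by
  refine ⟨fun h => ⟨fun h0 => (h 0 h0).1.false, fun i hi => (h i hi).2⟩, ?_⟩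
  rintro ⟨h0, hw⟩ i hi
  refine ⟨Nat.pos_of_ne_zero fun hi0 => h0 ?_, hw i hi⟩
  rwa [show i = 0 from Fin.ext hi0] at hi

theorem weakStarSeq_cons_zero {n : ℕ} (w : Fin n → Fin 3) :
    WeakStarSeq (Fin.cons 0 w) ↔ ∀ i, w i ≠ 1 := by
  simp [WeakStarSeq, Fin.forall_fin_succ]

theorem weakStarSeq_cons_of_ne_zero {n : ℕ} {a : Fin 3} (ha : a ≠ 0) (w : Fin n → Fin 3) :
    WeakStarSeq (Fin.cons a w) ↔ WeakStarSeq w := by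
  simp [WeakStarSeq, Fin.forall_fin_succ, ha]

theorem card_weakStarSeq_succ (n : ℕ) :
    Nat.card {v : Fin (n + 1) → Fin 3 // WeakStarSeq v} =
      2 ^ n + 2 * Nat.card {v : Fin n → Fin 3 // WeakStarSeq v} := by
  simp only [Nat.card_subtype_fin_succ_pi, Fin.sum_univ_three, weakStarSeq_cons_zero,
    weakStarSeq_cons_of_ne_zero one_ne_zero,
    weakStarSeq_cons_of_ne_zero (show (2 : Fin 3) ≠ 0 by decide),
    Nat.card_subtype_forall_ne, Fintype.card_fin, Nat.add_one_sub_one]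
  ring

theorem card_starSeq_succ (n : ℕ) :
    Nat.card {v : Fin (n + 1) → Fin 3 // StarSeq v} =
      2 ^ n + Nat.card {v : Fin n → Fin 3 // WeakStarSeq v} := by
  simp only [starSeq_iff, Nat.card_subtype_fin_succ_pi, Fin.sum_univ_three, Fin.cons_zero, ne_eq,
    zero_ne_one, show (2 : Fin 3) ≠ 1 by decide, not_false_eq_true, true_and, not_true_eq_false,
    false_and, weakStarSeq_cons_zero, weakStarSeq_cons_of_ne_zero (show (2 : Fin 3) ≠ 0 by decide),
    Nat.card_subtype_forall_ne, Fintype.card_fin, Nat.add_one_sub_one, Nat.card_of_isEmpty]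
  ring

theorem two_mul_card_weakStarSeq (n : ℕ) :
    2 * Nat.card {v : Fin n → Fin 3 // WeakStarSeq v} = 2 ^ n * (n + 2) := by
  induction n with
  | zero => simp [WeakStarSeq]
  | succ n ih =>
    rw [card_weakStarSeq_succ, pow_succ]
    linarith

theorem four_mul_card_starSeq_succ (n : ℕ) :
    4 * Nat.card {v : Fin (n + 1) → Fin 3 // StarSeq v} = 2 ^ (n + 1) * (n + 4) := by
  rw [card_starSeq_succ, pow_succ]
  linarith [two_mul_card_weakStarSeq n]

/-- The number of ★-sequences of length `n` is `2^(n-2) * (n+3)` for `n ≥ 2`;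
uniformly, `4 * count = 2^n * (n+3)` for all `n ≥ 1`. -/
theorem star_count (n : ℕ) (hn : 1 ≤ n) :
    4 * Nat.card {v : Fin n → Fin 3 // StarSeq v} = 2 ^ n * (n + 3) ∧
    (2 ≤ n → Nat.card {v : Fin n → Fin 3 // StarSeq v} = 2 ^ (n - 2) * (n + 3)) := by
  obtain ⟨m, rfl⟩ := Nat.exists_eq_add_of_le' hn
  have h4 := four_mul_card_starSeq_succ m
  refine ⟨h4, fun h2 => ?_⟩
  obtain ⟨k, rfl⟩ := Nat.exists_eq_add_of_le' (Nat.le_of_succ_le_succ h2)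
  refine Nat.eq_of_mul_eq_mul_left (by norm_num : 0 < 4) ?_
  rw [h4, show k + 1 + 1 - 2 = k by omega]
  ring
end

section
/- For n ≥ 2, the number of ★-sequences of length n that contain at least one entry equal to 0 is 2^(n-2)*(n+1). -/
instance {n : ℕ} : DecidablePred (@StarSeq n) := fun v => by
  unfold StarSeq; infer_instance

lemma starSeq_snoc {n : ℕ} (v : Fin n → Fin 3) (x : Fin 3) :
    StarSeq (Fin.snoc v x) ↔ StarSeq v ∧ (x = 1 → 0 < n ∧ ∀ j, v j ≠ 0) := by
  constructor
  · intro h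
    refine ⟨fun i hi => ?_, fun hx => ?_⟩
    · obtain ⟨h1, h2⟩ := h i.castSucc (by simpa using hi)
      refine ⟨by simpa using h1, fun j hj => ?_⟩
      have := h2 j.castSucc (by simpa using hj)
      simpa using this
    · obtain ⟨h1, h2⟩ := h (Fin.last n) (by simpa using hx)
      refine ⟨by simpa using h1, fun j => ?_⟩
      have := h2 j.castSucc (Fin.castSucc_lt_last j)
      simpa using this
  · rintro ⟨hv, hx⟩ i hi
    induction i using Fin.lastCases with
    | last =>
      obtain ⟨h1, h2⟩ := hx (by simpa using hi)
      refine ⟨by simpa using h1, fun j hj => ?_⟩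
      induction j using Fin.lastCases with
      | last => exact absurd hj (lt_irrefl _)
      | cast j => simpa using h2 j
    | cast i =>
      obtain ⟨h1, h2⟩ := hv i (by simpa using hi)
      refine ⟨by simpa using h1, fun j hj => ?_⟩
      induction j using Fin.lastCases with
      | last => exact absurd (hj.trans (Fin.castSucc_lt_last i)) (lt_irrefl _)
      | cast j =>
        have : j < i := by simpa using hj
        simpa using h2 j this

lemma snoc_exists_zero {n : ℕ} (v : Fin n → Fin 3) (x : Fin 3) :
    (∃ i, (Fin.snoc v x : Fin (n+1) → Fin 3) i = 0) ↔ (∃ i, v i = 0) ∨ x = 0 := by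
  constructor
  · rintro ⟨i, hi⟩
    induction i using Fin.lastCases with
    | last => right; simpa using hi
    | cast i => left; exact ⟨i, by simpa using hi⟩
  · rintro (⟨i, hi⟩ | hx)
    · exact ⟨i.castSucc, by simpa using hi⟩
    · exact ⟨Fin.last n, by simpa using hx⟩

noncomputable def Zc (n : ℕ) : ℕ := Nat.card {v : Fin n → Fin 3 // StarSeq v ∧ ∃ i, v i = 0}
noncomputable def Nc (n : ℕ) : ℕ := Nat.card {v : Fin n → Fin 3 // StarSeq v ∧ ∀ i, v i ≠ 0}

lemma card_snoc (n : ℕ) (P : (Fin (n + 1) → Fin 3) → Prop) [DecidablePred P] :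
    Nat.card {w : Fin (n + 1) → Fin 3 // P w} =
      ∑ v : Fin n → Fin 3, Fintype.card {x : Fin 3 // P (Fin.snoc v x)} := by
  rw [Nat.card_eq_fintype_card]
  have e : {w : Fin (n + 1) → Fin 3 // P w} ≃
      Σ v : Fin n → Fin 3, {x : Fin 3 // P (Fin.snoc v x)} :=
    (Equiv.subtypeEquiv (Fin.snocEquiv (fun _ => Fin 3)).symm
        (fun w => by simp [Fin.snocEquiv])).trans
      ((Equiv.subtypeEquiv (Equiv.prodComm (Fin 3) (Fin n → Fin 3)) (fun p => Iff.rfl)).trans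
        (Equiv.subtypeProdEquivSigmaSubtype (fun v x => P (Fin.snoc v x))))
  rw [Fintype.card_congr e, Fintype.card_sigma]

lemma Zc_succ (n : ℕ) (hn : 1 ≤ n) : Zc (n + 1) = 2 * Zc n + Nc n := by
  rw [Zc, card_snoc]
  have key : ∀ v : Fin n → Fin 3,
      Fintype.card {x : Fin 3 // StarSeq (Fin.snoc v x) ∧ ∃ i, (Fin.snoc v x : Fin (n + 1) → Fin 3) i = 0} =
        (if StarSeq v ∧ ∃ i, v i = 0 then 2 else 0) +
        (if StarSeq v ∧ ∀ i, v i ≠ 0 then 1 else 0) := by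
    intro v
    by_cases hs : StarSeq v
    · by_cases hz : ∃ i, v i = 0
      · rw [if_pos ⟨hs, hz⟩, if_neg (by rintro ⟨-, h⟩; obtain ⟨i, hi⟩ := hz; exact h i hi)]
        have : ∀ x : Fin 3, (StarSeq (Fin.snoc v x) ∧ ∃ i, (Fin.snoc v x : Fin (n + 1) → Fin 3) i = 0) ↔ x ≠ 1 := by
          intro x
          rw [starSeq_snoc, snoc_exists_zero]
          constructor
          · rintro ⟨⟨-, hx⟩, -⟩ h1
            obtain ⟨i, hi⟩ := hz
            exact (hx h1).2 i hi
          · intro h1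
            exact ⟨⟨hs, fun h => absurd h h1⟩, Or.inl hz⟩
        rw [Fintype.card_congr (Equiv.subtypeEquivRight this)]
        decide
      · rw [if_neg (by rintro ⟨-, h⟩; exact hz h), if_pos ⟨hs, fun i hi => hz ⟨i, hi⟩⟩]
        have : ∀ x : Fin 3, (StarSeq (Fin.snoc v x) ∧ ∃ i, (Fin.snoc v x : Fin (n + 1) → Fin 3) i = 0) ↔ x = 0 := by
          intro x
          rw [starSeq_snoc, snoc_exists_zero]
          constructor
          · rintro ⟨-, (h | h)⟩
            · exact absurd h hz
            · exact h
          · intro h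
            subst h
            exact ⟨⟨hs, fun h => by exact absurd h (by decide)⟩, Or.inr rfl⟩
        rw [Fintype.card_congr (Equiv.subtypeEquivRight this)]
        decide
    · rw [if_neg (fun h => hs h.1), if_neg (fun h => hs h.1)]
      have : IsEmpty {x : Fin 3 // StarSeq (Fin.snoc v x) ∧ ∃ i, (Fin.snoc v x : Fin (n + 1) → Fin 3) i = 0} := by
        refine ⟨fun y => hs ((starSeq_snoc v y.1).1 y.2.1).1⟩
      simp [Fintype.card_eq_zero]
  simp_rw [key]
  rw [Finset.sum_add_distrib]
  rw [← Finset.sum_filter, ← Finset.sum_filter]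
  simp only [Finset.sum_const, smul_eq_mul]
  rw [Zc, Nc, Nat.card_eq_fintype_card, Nat.card_eq_fintype_card,
    Fintype.card_subtype, Fintype.card_subtype]
  ring

lemma snoc_forall_ne {n : ℕ} (v : Fin n → Fin 3) (x : Fin 3) :
    (∀ i, (Fin.snoc v x : Fin (n+1) → Fin 3) i ≠ 0) ↔ (∀ i, v i ≠ 0) ∧ x ≠ 0 := by
  constructor
  · intro h
    exact ⟨fun i hi => h i.castSucc (by simpa using hi), fun hx => h (Fin.last n) (by simpa using hx)⟩
  · rintro ⟨h1, h2⟩ i hi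
    induction i using Fin.lastCases with
    | last => exact h2 (by simpa using hi)
    | cast i => exact h1 i (by simpa using hi)

lemma Nc_succ (n : ℕ) (hn : 1 ≤ n) : Nc (n + 1) = 2 * Nc n := by
  rw [Nc, card_snoc]
  have key : ∀ v : Fin n → Fin 3,
      Fintype.card {x : Fin 3 // StarSeq (Fin.snoc v x) ∧ ∀ i, (Fin.snoc v x : Fin (n + 1) → Fin 3) i ≠ 0} =
        (if StarSeq v ∧ ∀ i, v i ≠ 0 then 2 else 0) := by
    intro v
    by_cases hs : StarSeq v ∧ ∀ i, v i ≠ 0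
    · rw [if_pos hs]
      have : ∀ x : Fin 3, (StarSeq (Fin.snoc v x) ∧ ∀ i, (Fin.snoc v x : Fin (n + 1) → Fin 3) i ≠ 0) ↔ x ≠ 0 := by
        intro x
        rw [starSeq_snoc, snoc_forall_ne]
        constructor
        · rintro ⟨-, -, h⟩
          exact h
        · intro hx
          exact ⟨⟨hs.1, fun _ => ⟨hn, hs.2⟩⟩, hs.2, hx⟩
      rw [Fintype.card_congr (Equiv.subtypeEquivRight this)]
      decide
    · rw [if_neg hs]
      have : IsEmpty {x : Fin 3 // StarSeq (Fin.snoc v x) ∧ ∀ i, (Fin.snoc v x : Fin (n + 1) → Fin 3) i ≠ 0} := by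
        refine ⟨fun y => hs ⟨((starSeq_snoc v y.1).1 y.2.1).1, ((snoc_forall_ne v y.1).1 y.2.2).1⟩⟩
      simp [Fintype.card_eq_zero]
  simp_rw [key]
  rw [← Finset.sum_filter]
  simp only [Finset.sum_const, smul_eq_mul]
  rw [Nc, Nat.card_eq_fintype_card, Fintype.card_subtype]
  ring

lemma Zc_one : Zc 1 = 1 := by
  rw [Zc, Nat.card_eq_fintype_card]
  decide

lemma Nc_one : Nc 1 = 1 := by
  rw [Nc, Nat.card_eq_fintype_card]
  decide

lemma Nc_eq (n : ℕ) (hn : 1 ≤ n) : Nc n = 2 ^ (n - 1) := by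
  induction n, hn using Nat.le_induction with
  | base => simpa using Nc_one
  | succ n hn ih =>
    rw [Nc_succ n hn, ih]
    rw [show n + 1 - 1 = (n - 1) + 1 from by omega, pow_succ]
    ring

/-- For `n ≥ 2`, the number of ★-sequences of length `n` containing at least one
entry equal to `0` is `2^(n-2) * (n+1)`. -/
theorem star_with_zero_count (n : ℕ) (hn : 2 ≤ n) :
    Nat.card {v : Fin n → Fin 3 // StarSeq v ∧ ∃ i, v i = 0} = 2 ^ (n - 2) * (n + 1) := by
  have h : ∀ m : ℕ, 2 ≤ m → Zc m = 2 ^ (m - 2) * (m + 1) := by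
    intro m hm
    induction m, hm using Nat.le_induction with
    | base =>
      rw [show Zc 2 = Zc (1 + 1) from rfl, Zc_succ 1 le_rfl, Zc_one, Nc_one]
      norm_num
    | succ m hm ih =>
      rw [Zc_succ m (by omega), ih, Nc_eq m (by omega)]
      have e1 : m + 1 - 2 = (m - 2) + 1 := by omega
      have e2 : m - 1 = (m - 2) + 1 := by omega
      rw [e1, e2, pow_succ]
      ring
  exact h n hn
end

section
/- Let v be the coordinate tuple of a vertex of the freehedron as in Proposition on vertex coordinates: v_1 = 2 if the right forest is nonempty and 0 otherwise; for i > 1, v_i = 2 if leaves L_{i-1}, L_i (numbered right to left) lie on the same tree, v_i = 1 if they lie on different trees of the right forest, v_i = 0 otherwise. Then v satisfies condition ★: v_i = 1 implies i > 1 and v_j ≠ 0 for all j < i. -/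
/-- The coordinate tuple of a vertex of the freehedron satisfies condition ★.
Here a 0-dimensional forest-tree-forest triple with `n` leaves (numbered right to
left, 0-based) is modelled by: `r` = number of leaves in the right forest (these are
the first `r` leaves), and `g` = tree index of each leaf (consecutive leaves lie on
the same or on adjacent trees, and the two forests share no tree). The coordinates
are: `v 0 = 2` iff the right forest is nonempty, else `0`; for `k > 0`, `v k = 2` if
leaves `k-1`, `k` are on the same tree, `1` if on different trees of the right forest,
`0` otherwise. Condition ★: `v i = 1` implies `i > 0` and `v j ≠ 0` for all `j < i`. -/
theorem vertex_coordinates_satisfy_star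
    (n r : ℕ) (hr : r ≤ n) (g : ℕ → ℕ) (v : ℕ → Fin 3)
    (hg0 : g 0 = 0)
    (hstep : ∀ i, i + 1 < n → (g (i + 1) = g i ∨ g (i + 1) = g i + 1))
    (hbound : 0 < r → r < n → g r ≠ g (r - 1))
    (hv0 : v 0 = if 0 < r then 2 else 0)
    (hv : ∀ k, 0 < k → k < n →
      v k = if g k = g (k - 1) then 2 else if k < r then 1 else 0) :
    ∀ i < n, v i = 1 → 0 < i ∧ ∀ j < i, v j ≠ 0 := by
  intro i hi hvi
  have hipos : 0 < i := by
    rcases Nat.eq_zero_or_pos i with h | h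
    · subst h
      rw [hv0] at hvi
      split at hvi <;> simp_all
    · exact h
  have hir : i < r := by
    have := hv i hipos hi
    rw [this] at hvi
    split at hvi
    · exact absurd hvi (by decide)
    · split at hvi
      · assumption
      · exact absurd hvi (by decide)
  refine ⟨hipos, ?_⟩
  intro j hj
  rcases Nat.eq_zero_or_pos j with h | h
  · subst h
    rw [hv0]
    have : 0 < r := lt_of_le_of_lt (Nat.zero_le i) hir
    simp [this]
  · have hjn : j < n := lt_trans hj hi
    rw [hv j h hjn]
    split
    · decide
    · have : j < r := lt_trans hj hir
      simp [this]
end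

section
/- Define the vertex set V^n ⊆ {0,1,2}^n of the freehedron inductively: V^1 = {(0),(2)}, X^1 = {(2)}; V^n = {(v,0), (v,2) : v ∈ V^{n-1}} ∪ {(v,1) : v ∈ X^{n-1}}, X^n = {(v,1),(v,2) : v ∈ X^{n-1}}. Then V^n equals exactly the set of tuples satisfying condition ★ (v_i = 1 implies i > 1 and v_j ≠ 0 for j < i). -/
/-- Vertex tuples of the distinguished facet `X^n`:
`X^1 = {(2)}` and `X^n = {(v,1), (v,2) : v ∈ X^{n-1}}`. -/
inductive DistFacet : ℕ → List (Fin 3) → Prop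
  | base : DistFacet 1 [2]
  | one {n v} : DistFacet n v → DistFacet (n + 1) (v ++ [1])
  | two {n v} : DistFacet n v → DistFacet (n + 1) (v ++ [2])

/-- Vertex tuples of the freehedron `F^n`: `V^1 = {(0),(2)}`,
`V^n = {(v,0), (v,2) : v ∈ V^{n-1}} ∪ {(v,1) : v ∈ X^{n-1}}`. -/
inductive FreeVert : ℕ → List (Fin 3) → Prop
  | base0 : FreeVert 1 [0]
  | base2 : FreeVert 1 [2]
  | app0 {n v} : FreeVert n v → FreeVert (n + 1) (v ++ [0])
  | app2 {n v} : FreeVert n v → FreeVert (n + 1) (v ++ [2])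
  | app1 {n v} : DistFacet n v → FreeVert (n + 1) (v ++ [1])

lemma fin3_cases (a : Fin 3) : a = 0 ∨ a = 1 ∨ a = 2 := by revert a; decide

lemma concat_get {α} (v : List α) (a : α) {i} (hi : i < (v ++ [a]).length) :
    (v ++ [a])[i] = if h : i < v.length then v[i] else a := by
  split
  · exact List.getElem_append_left _
  · have h' : i = v.length := by simp at hi; omega
    subst h'
    simp

lemma concat_len {α} (v : List α) (a : α) : (v ++ [a]).length = v.length + 1 := by simp

lemma dist_char {n v} (h : DistFacet n v) :
    v.length = n ∧ 0 < n ∧ (∀ i (hi : i < v.length), v[i] ≠ 0) ∧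
      (∀ i (hi : i < v.length), v[i] = 1 → 0 < i) := by
  induction h with
  | base =>
    refine ⟨rfl, one_pos, ?_, ?_⟩ <;> intro i hi <;>
      (have : i = 0 := by simp at hi; omega) <;> subst this
    · simp
    · intro h; simp at h
  | @one n w _ ih =>
    obtain ⟨hl, hn, h0, h1⟩ := ih
    refine ⟨by simp [hl], by omega, ?_, ?_⟩ <;> intro i hi <;> rw [concat_get] <;> split
    · exact h0 i _
    · decide
    · exact h1 i _
    · intro _; rw [concat_len] at hi; omega
  | @two n w _ ih =>
    obtain ⟨hl, hn, h0, h1⟩ := ih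
    refine ⟨by simp [hl], by omega, ?_, ?_⟩ <;> intro i hi <;> rw [concat_get] <;> split
    · exact h0 i _
    · decide
    · exact h1 i _
    · intro h; exact absurd h (by decide)

lemma dist_of_char {n} : ∀ v, v.length = n → 0 < n →
    (∀ i (hi : i < v.length), v[i] ≠ 0) →
    (∀ i (hi : i < v.length), v[i] = 1 → 0 < i) → DistFacet n v := by
  induction n with
  | zero => omega
  | succ n ih =>
    intro v hl _ h0 h1
    rcases v.eq_nil_or_concat with rfl | ⟨w, a, ha⟩
    · simp at hl
    rw [List.concat_eq_append] at ha
    subst ha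
    rw [concat_len] at hl
    rcases Nat.eq_zero_or_pos n with rfl | hn
    · have hw : w = [] := List.eq_nil_of_length_eq_zero (by omega)
      subst hw
      have h0' := h0 0 (by simp)
      have h1' := h1 0 (by simp)
      simp at h0' h1'
      rcases fin3_cases a with rfl | rfl | rfl
      · exact absurd rfl h0'
      · omega
      · exact DistFacet.base
    · have hw : w.length = n := by omega
      have hd : DistFacet n w := by
        refine ih w hw hn ?_ ?_ <;> intro i hi
        · have := h0 i (by rw [concat_len]; omega)
          rwa [concat_get, dif_pos hi] at this
        · have := h1 i (by rw [concat_len]; omega)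
          rwa [concat_get, dif_pos hi] at this
      have ha : a ≠ 0 := by
        have := h0 w.length (by rw [concat_len]; omega)
        rwa [concat_get, dif_neg (by omega)] at this
      rcases fin3_cases a with rfl | rfl | rfl
      · exact absurd rfl ha
      · exact hd.one
      · exact hd.two

lemma star_to_free : ∀ n, 1 ≤ n → ∀ v : List (Fin 3), v.length = n →
    (∀ i (hi : i < v.length), v[i] = 1 →
      0 < i ∧ ∀ j (hj : j < i), v[j]'(hj.trans hi) ≠ 0) → FreeVert n v := by
  intro n
  induction n with
  | zero => omega
  | succ n ih =>
    intro _ v hl hs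
    rcases v.eq_nil_or_concat with rfl | ⟨w, a, ha⟩
    · simp at hl
    rw [List.concat_eq_append] at ha
    subst ha
    rw [concat_len] at hl
    rcases Nat.eq_zero_or_pos n with rfl | hn
    · have hw : w = [] := List.eq_nil_of_length_eq_zero (by omega)
      subst hw
      rcases fin3_cases a with rfl | rfl | rfl
      · exact FreeVert.base0
      · have := hs 0 (by simp) (by decide)
        omega
      · exact FreeVert.base2
    · have hw : w.length = n := by omega
      have hsw : ∀ i (hi : i < w.length), w[i] = 1 →
          0 < i ∧ ∀ j (hj : j < i), w[j]'(hj.trans hi) ≠ 0 := by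
        intro i hi h1
        have h1' : (w ++ [a])[i]'(by rw [concat_len]; omega) = 1 := by
          rw [concat_get, dif_pos hi]; exact h1
        obtain ⟨hp, hj⟩ := hs i _ h1'
        refine ⟨hp, fun j hj' => ?_⟩
        have := hj j hj'
        rwa [concat_get, dif_pos (by omega)] at this
      rcases fin3_cases a with rfl | rfl | rfl
      · exact (ih hn w hw hsw).app0
      · have h1 : (w ++ [1])[w.length]'(by rw [concat_len]; omega) = 1 := by
          rw [concat_get, dif_neg (by omega)]
        obtain ⟨hp, hj⟩ := hs w.length _ h1
        have h0 : ∀ i (hi : i < w.length), w[i] ≠ 0 := by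
          intro i hi
          have := hj i hi
          rwa [concat_get, dif_pos hi] at this
        have h1'' : ∀ i (hi : i < w.length), w[i] = 1 → 0 < i :=
          fun i hi hh => (hsw i hi hh).1
        exact FreeVert.app1 (dist_of_char w hw hn h0 h1'')
      · exact (ih hn w hw hsw).app2

/-- The inductively defined vertex set `V^n` of the freehedron consists exactly of
the length-`n` tuples satisfying condition ★: `v i = 1` implies `i > 0` (0-based)
and `v j ≠ 0` for all `j < i`. -/
theorem freeVert_iff_star (n : ℕ) (hn : 1 ≤ n) (v : List (Fin 3)) :
    FreeVert n v ↔
      v.length = n ∧ ∀ i, (hi : i < v.length) → v[i]'hi = 1 →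
        0 < i ∧ ∀ j, (hj : j < i) → v[j]'(hj.trans hi) ≠ 0 := by
  constructor
  · intro h
    clear hn
    induction h with
    | base0 =>
      refine ⟨rfl, fun i hi h1 => ?_⟩
      have : i = 0 := by simp at hi; omega
      subst this
      simp at h1
    | base2 =>
      refine ⟨rfl, fun i hi h1 => ?_⟩
      have : i = 0 := by simp at hi; omega
      subst this
      simp at h1
    | @app0 n w _ ih =>
      obtain ⟨hl, hs⟩ := ih
      refine ⟨by simp [hl], fun i hi h1 => ?_⟩
      rw [concat_get] at h1
      split at h1
      next hlt =>
        obtain ⟨hp, hj⟩ := hs i hlt h1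
        refine ⟨hp, fun j hj' => ?_⟩
        rw [concat_get, dif_pos (by omega)]
        exact hj j hj'
      next => exact absurd h1 (by decide)
    | @app2 n w _ ih =>
      obtain ⟨hl, hs⟩ := ih
      refine ⟨by simp [hl], fun i hi h1 => ?_⟩
      rw [concat_get] at h1
      split at h1
      next hlt =>
        obtain ⟨hp, hj⟩ := hs i hlt h1
        refine ⟨hp, fun j hj' => ?_⟩
        rw [concat_get, dif_pos (by omega)]
        exact hj j hj'
      next => exact absurd h1 (by decide)
    | @app1 n w hd =>
      obtain ⟨hl, hn', h0, h1'⟩ := dist_char hd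
      refine ⟨by simp [hl], fun i hi h1 => ?_⟩
      rw [concat_len] at hi
      rw [concat_get] at h1
      split at h1
      next hlt =>
        refine ⟨h1' i hlt h1, fun j hj' => ?_⟩
        rw [concat_get, dif_pos (by omega)]
        exact h0 j _
      next hlt =>
        refine ⟨by omega, fun j hj' => ?_⟩
        rw [concat_get, dif_pos (by omega)]
        exact h0 j (by omega)
  · exact fun ⟨hl, hs⟩ => star_to_free n hn v hl hs
end
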